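/- (Theorem 2.1, third identity, q-case.) Let n ∈ ℕ, α₁, α₂ ∈ (0,1) and let m₂ be a natural number with m₂ ≤ n. Then the m₂-th q-factorial moment of the second coordinate of the q-trinomial distribution of the first kind satisfies ∑_{y₁=0}^{n} ∑_{y₂=0}^{n−y₁} [y₂]_{m₂,q} · f(y₁,y₂) = [n]_{m₂,q} · α₂^{m₂} · q^{b(m₂)} / ( ⟨1⊕α₂⟩_{m₂} · ∏_{i=1}^{m₂} (1 + α₁·q^{n−m₂+i−1}) ). -/

import Mathlib

open Finset

/-- q-integer `[k]_q = (1 - q^k)/(1 - q)`. -/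
noncomputable def qInt (q : ℝ) (k : ℤ) : ℝ := (1 - q ^ k) / (1 - q)

/-- q-factorial `[n]_q! = ∏_{i=1}^n [i]_q`. -/
noncomputable def qFact (q : ℝ) (n : ℕ) : ℝ := ∏ i ∈ Finset.Icc 1 n, qInt q (i : ℤ)

/-- q-binomial coefficient `C_q(n,k)`. -/
noncomputable def qBinom (q : ℝ) (n k : ℕ) : ℝ := qFact q n / (qFact q k * qFact q (n - k))

/-- q-falling factorial `[u]_{m,q} = ∏_{i=1}^m [u-i+1]_q`. -/
noncomputable def qFall (q : ℝ) (u : ℤ) (m : ℕ) : ℝ := ∏ i ∈ Finset.Icc 1 m, qInt q (u - (i : ℤ) + 1)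

/-- `[k]_{q⁻¹} = q^{1-k} · [k]_q`. -/
noncomputable def qIntInv (q : ℝ) (k : ℤ) : ℝ := q ^ (1 - k) * qInt q k

/-- `[u]_{m,q⁻¹} = ∏_{i=1}^m [u-i+1]_{q⁻¹}`. -/
noncomputable def qFallInv (q : ℝ) (u : ℤ) (m : ℕ) : ℝ := ∏ i ∈ Finset.Icc 1 m, qIntInv q (u - (i : ℤ) + 1)

/-- `b(k) = k(k-1)/2`. -/
def bb (k : ℕ) : ℕ := k * (k - 1) / 2

/-- `⟨1 ⊕ α⟩_m = ∏_{i=1}^m (1 + α q^{i-1})`. -/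
noncomputable def oplus (q α : ℝ) (m : ℕ) : ℝ := ∏ i ∈ Finset.Icc 1 m, (1 + α * q ^ (i - 1))

/-- `⟨1 ⊖ β⟩_m = ∏_{i=1}^m (1 - β q^{i-1})`. -/
noncomputable def ominus (q β : ℝ) (m : ℕ) : ℝ := ∏ i ∈ Finset.Icc 1 m, (1 - β * q ^ (i - 1))

/-- q-trinomial coefficient `T_q(n; x₁, x₂)`. -/
noncomputable def qTri (q : ℝ) (n x1 x2 : ℕ) : ℝ :=
  qFact q n / (qFact q x1 * qFact q x2 * qFact q (n - x1 - x2))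

/-- pmf of the q-trinomial distribution of the first kind. -/
noncomputable def fpmf (q a1 a2 : ℝ) (n y1 y2 : ℕ) : ℝ :=
  qTri q n y1 y2 * a1 ^ y1 * a2 ^ y2 * q ^ (bb y1 + bb y2) /
    (oplus q a1 n * oplus q a2 (n - y1))

/-!
Write `T_q(n; y₁, y₂) = C_q(n, y₁) · C_q(n − y₁, y₂)`, so that the weight factorises into two
terms `C_q(N, k) α^k q^{b(k)}` of the q-binomial theorem `Σ_k C_q(N, k) α^k q^{b(k)} = ⟨1⊕α⟩_N`.
Absorbing the falling factorial, `[y]_{m,q} C_q(N, y) = [N]_{m,q} C_q(N − m, y − m)`, and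
`b(m + z) = b(m) + b(z) + m z` turn the inner sum over `y₂` into
`[N]_{m,q} α₂^m q^{b(m)} ⟨1⊕α₂ q^m⟩_{N−m}`, which cancels against `⟨1⊕α₂⟩_N` up to `⟨1⊕α₂⟩_m`.
In the outer sum `[n − y₁]_{m,q} C_q(n, y₁) = [n]_{m,q} C_q(n − m, y₁)`, so a second application
of the q-binomial theorem gives `[n]_{m,q} ⟨1⊕α₁⟩_{n−m}`, and
`⟨1⊕α₁⟩_n = ⟨1⊕α₁⟩_{n−m} · ∏_{i=1}^m (1 + α₁ q^{n−m+i−1})`.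
-/

section QCalculus

variable {q : ℝ}

lemma qInt_natCast_eq_geom_sum (hq1 : q ≠ 1) (k : ℕ) : qInt q k = ∑ i ∈ range k, q ^ i := by
  rw [qInt, zpow_natCast, geom_sum_eq hq1, ← neg_div_neg_eq, neg_sub, neg_sub]

lemma qInt_natCast_pos (hq0 : 0 ≤ q) (hq1 : q ≠ 1) {k : ℕ} (hk : 0 < k) : 0 < qInt q k := by
  rw [qInt_natCast_eq_geom_sum hq1]
  exact sum_pos' (fun i _ => pow_nonneg hq0 i) ⟨0, mem_range.2 hk, by simp⟩

lemma qInt_natCast_add (q : ℝ) (a b : ℕ) :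
    qInt q ((a + b : ℕ) : ℤ) = qInt q a + q ^ a * qInt q b := by
  simp only [qInt, zpow_natCast, pow_add]
  ring

lemma qFact_succ (q : ℝ) (n : ℕ) : qFact q (n + 1) = qFact q n * qInt q ((n + 1 : ℕ) : ℤ) :=
  prod_Icc_succ_top (by omega) _

lemma qFact_zero (q : ℝ) : qFact q 0 = 1 := by simp [qFact]

lemma qFact_pos (hq0 : 0 ≤ q) (hq1 : q ≠ 1) (n : ℕ) : 0 < qFact q n :=
  prod_pos fun _ hi => qInt_natCast_pos hq0 hq1 (mem_Icc.1 hi).1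

lemma qBinom_zero_right (hq0 : 0 ≤ q) (hq1 : q ≠ 1) (n : ℕ) : qBinom q n 0 = 1 := by
  rw [qBinom, Nat.sub_zero, qFact_zero, one_mul, div_self (qFact_pos hq0 hq1 n).ne']

lemma qBinom_self (hq0 : 0 ≤ q) (hq1 : q ≠ 1) (n : ℕ) : qBinom q n n = 1 := by
  rw [qBinom, Nat.sub_self, qFact_zero, mul_one, div_self (qFact_pos hq0 hq1 n).ne']

lemma qBinom_symm (q : ℝ) {n k : ℕ} (hk : k ≤ n) : qBinom q n (n - k) = qBinom q n k := by
  rw [qBinom, qBinom, Nat.sub_sub_self hk, mul_comm]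

lemma qBinom_succ_succ (hq0 : 0 ≤ q) (hq1 : q ≠ 1) {n k : ℕ} (hk : k < n) :
    qBinom q (n + 1) (k + 1) = qBinom q n k + q ^ (k + 1) * qBinom q n (k + 1) := by
  obtain ⟨a, rfl⟩ := Nat.exists_eq_add_of_lt hk
  have hsplit : qInt q ((k + a + 1 + 1 : ℕ) : ℤ) = qInt q ((k + 1 : ℕ) : ℤ)
      + q ^ (k + 1) * qInt q ((a + 1 : ℕ) : ℤ) := by
    rw [← qInt_natCast_add, show k + 1 + (a + 1) = k + a + 1 + 1 by omega]
  rw [qBinom, qBinom, qBinom, show k + a + 1 + 1 - (k + 1) = a + 1 by omega,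
    show k + a + 1 - k = a + 1 by omega, show k + a + 1 - (k + 1) = a by omega,
    qFact_succ q (k + a + 1), qFact_succ q k, qFact_succ q a, hsplit]
  have := (qFact_pos hq0 hq1 (k + a + 1)).ne'
  have := (qFact_pos hq0 hq1 k).ne'
  have := (qFact_pos hq0 hq1 a).ne'
  have := (qInt_natCast_pos hq0 hq1 k.succ_pos).ne'
  have := (qInt_natCast_pos hq0 hq1 a.succ_pos).ne'
  field_simp

lemma bb_eq_sum_range (k : ℕ) : bb k = ∑ i ∈ range k, i := (sum_range_id k).symm

lemma bb_succ (k : ℕ) : bb (k + 1) = bb k + k := by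
  rw [bb_eq_sum_range, bb_eq_sum_range, sum_range_succ]

lemma bb_add (m k : ℕ) : bb (m + k) = bb m + bb k + m * k := by
  rw [bb_eq_sum_range, bb_eq_sum_range, bb_eq_sum_range, sum_range_add, sum_add_distrib, sum_const,
    card_range, smul_eq_mul]
  ring

lemma oplus_eq_prod_range (q α : ℝ) (m : ℕ) :
    oplus q α m = ∏ i ∈ range m, (1 + α * q ^ i) := by
  induction m with
  | zero => rfl
  | succ m ih =>
    rw [oplus, prod_Icc_succ_top (by omega), ← oplus, ih, prod_range_succ, Nat.add_sub_cancel]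

lemma oplus_add (q α : ℝ) (m k : ℕ) :
    oplus q α (m + k) = oplus q α m * oplus q (α * q ^ m) k := by
  simp only [oplus_eq_prod_range, prod_range_add, pow_add, mul_assoc]

lemma oplus_succ' (q α : ℝ) (n : ℕ) : oplus q α (n + 1) = (1 + α) * oplus q (α * q) n := by
  rw [add_comm, oplus_add, pow_one]
  simp [oplus]

lemma oplus_pos (hq0 : 0 ≤ q) {α : ℝ} (hα : 0 ≤ α) (m : ℕ) : 0 < oplus q α m :=
  prod_pos fun _ _ => by positivity

lemma prod_Icc_one_add_mul_pow_eq_oplus (q α : ℝ) (c m : ℕ) :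
    ∏ i ∈ Icc 1 m, (1 + α * q ^ (c + i - 1)) = oplus q (α * q ^ c) m :=
  prod_congr rfl fun i hi => by
    rw [mul_assoc, ← pow_add, Nat.add_sub_assoc (mem_Icc.1 hi).1]

end QCalculus

section QBinomialTheorem

variable {q : ℝ}

noncomputable def qBinomWeight (q α : ℝ) (n k : ℕ) : ℝ := qBinom q n k * α ^ k * q ^ bb k

theorem oplus_eq_sum_qBinomWeight (hq0 : 0 ≤ q) (hq1 : q ≠ 1) (n : ℕ) (α : ℝ) :
    oplus q α n = ∑ k ∈ range (n + 1), qBinomWeight q α n k := by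
  induction n generalizing α with
  | zero => simp [oplus, qBinomWeight, qBinom_zero_right hq0 hq1, bb]
  | succ n ih =>
    set V := qBinomWeight q (α * q) n
    have hbot : qBinomWeight q α (n + 1) 0 = V 0 := by
      simp [V, qBinomWeight, qBinom_zero_right hq0 hq1]
    have hpascal : ∀ k ∈ range n, qBinomWeight q α (n + 1) (k + 1) = V (k + 1) + α * V k := by
      intro k hk
      simp only [V, qBinomWeight, qBinom_succ_succ hq0 hq1 (mem_range.1 hk), bb_succ]
      ring
    have htop : qBinomWeight q α (n + 1) (n + 1) = α * V n := by
      simp only [V, qBinomWeight, qBinom_self hq0 hq1, bb_succ]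
      ring
    rw [oplus_succ', ih, sum_range_succ' _ (n + 1),
      sum_range_succ (fun k => qBinomWeight q α (n + 1) (k + 1)), sum_congr rfl hpascal,
      sum_add_distrib, ← mul_sum, htop, hbot]
    linear_combination sum_range_succ' V n + α * sum_range_succ V n

end QBinomialTheorem

section QFalling

variable {q : ℝ}

lemma qFall_succ (q : ℝ) (u : ℤ) (m : ℕ) :
    qFall q u (m + 1) = qFall q u m * qInt q (u - m) := by
  rw [qFall, prod_Icc_succ_top (by omega), ← qFall]
  push_cast
  ring_nf

lemma qFall_natCast_eq_zero (q : ℝ) {y m : ℕ} (h : y < m) : qFall q y m = 0 :=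
  prod_eq_zero (i := y + 1) (mem_Icc.2 ⟨by omega, h⟩) (by simp [qInt])

lemma qFall_natCast_eq_div (hq0 : 0 ≤ q) (hq1 : q ≠ 1) {u m : ℕ} (h : m ≤ u) :
    qFall q u m = qFact q u / qFact q (u - m) := by
  induction m with
  | zero => simp [qFall, div_self (qFact_pos hq0 hq1 u).ne']
  | succ m ih =>
    obtain ⟨k, rfl⟩ := Nat.exists_eq_add_of_le h
    rw [qFall_succ, ih (by omega), show m + 1 + k - m = k + 1 by omega,
      show m + 1 + k - (m + 1) = k by omega, qFact_succ,
      show ((m + 1 + k : ℕ) : ℤ) - m = ((k + 1 : ℕ) : ℤ) by push_cast; ring]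
    have := (qFact_pos hq0 hq1 k).ne'
    have := (qInt_natCast_pos hq0 hq1 k.succ_pos).ne'
    field_simp

lemma qFall_mul_qBinom (hq0 : 0 ≤ q) (hq1 : q ≠ 1) {m y n : ℕ} (hmy : m ≤ y) (hyn : y ≤ n) :
    qFall q y m * qBinom q n y = qFall q n m * qBinom q (n - m) (y - m) := by
  rw [qFall_natCast_eq_div hq0 hq1 hmy, qFall_natCast_eq_div hq0 hq1 (hmy.trans hyn), qBinom,
    qBinom, show n - m - (y - m) = n - y by omega]
  have := (qFact_pos hq0 hq1 y).ne'
  have := (qFact_pos hq0 hq1 (y - m)).ne'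
  have := (qFact_pos hq0 hq1 (n - m)).ne'
  have := (qFact_pos hq0 hq1 (n - y)).ne'
  field_simp

lemma qFall_sub_mul_qBinom (hq0 : 0 ≤ q) (hq1 : q ≠ 1) {m y n : ℕ} (h : y + m ≤ n) :
    qFall q (n - y : ℕ) m * qBinom q n y = qFall q n m * qBinom q (n - m) y := by
  rw [← qBinom_symm q (by omega : y ≤ n), qFall_mul_qBinom hq0 hq1 (by omega) (by omega),
    show n - y - m = n - m - y by omega, qBinom_symm q (by omega)]

theorem sum_qFall_mul_qBinomWeight (hq0 : 0 ≤ q) (hq1 : q ≠ 1) (α : ℝ) (m n : ℕ) :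
    ∑ y ∈ range (n + 1), qFall q y m * qBinomWeight q α n y
      = qFall q n m * α ^ m * q ^ bb m * oplus q (α * q ^ m) (n - m) := by
  rcases lt_or_ge n m with h | h
  · rw [qFall_natCast_eq_zero q h, sum_eq_zero fun y hy => by
      rw [qFall_natCast_eq_zero q (by have := mem_range.1 hy; omega), zero_mul]]
    ring
  obtain ⟨k, rfl⟩ := Nat.exists_eq_add_of_le h
  rw [show m + k + 1 = m + (k + 1) by ring, sum_range_add, sum_eq_zero fun y hy => by
      rw [qFall_natCast_eq_zero q (mem_range.1 hy), zero_mul],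
    zero_add, Nat.add_sub_cancel_left, oplus_eq_sum_qBinomWeight hq0 hq1, mul_sum]
  refine sum_congr rfl fun z hz => ?_
  rw [qBinomWeight, qBinomWeight, ← mul_assoc, ← mul_assoc,
    qFall_mul_qBinom hq0 hq1 (by omega) (by have := mem_range.1 hz; omega),
    Nat.add_sub_cancel_left, Nat.add_sub_cancel_left, bb_add]
  ring

theorem sum_qFall_mul_qBinomWeight_div_oplus (hq0 : 0 ≤ q) (hq1 : q ≠ 1) {α : ℝ} (hα : 0 ≤ α)
    (m n : ℕ) :
    ∑ y ∈ range (n + 1), qFall q y m * qBinomWeight q α n y / oplus q α n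
      = qFall q n m * α ^ m * q ^ bb m / oplus q α m := by
  rw [← sum_div, sum_qFall_mul_qBinomWeight hq0 hq1]
  rcases lt_or_ge n m with h | h
  · simp [qFall_natCast_eq_zero q h]
  rw [← Nat.add_sub_cancel' h, oplus_add, Nat.add_sub_cancel_left,
    mul_div_mul_right _ _ (oplus_pos hq0 (by positivity) _).ne']

theorem sum_qFall_sub_mul_qBinomWeight (hq0 : 0 ≤ q) (hq1 : q ≠ 1) (α : ℝ) {m n : ℕ}
    (hm : m ≤ n) :
    ∑ y ∈ range (n + 1), qFall q (n - y : ℕ) m * qBinomWeight q α n y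
      = qFall q n m * oplus q α (n - m) := by
  obtain ⟨k, rfl⟩ := Nat.exists_eq_add_of_le' hm
  rw [show k + m + 1 = k + 1 + m by ring, sum_range_add, sum_eq_zero (s := range m) fun i hi => by
      rw [qFall_natCast_eq_zero q (by have := mem_range.1 hi; omega), zero_mul],
    add_zero, Nat.add_sub_cancel, oplus_eq_sum_qBinomWeight hq0 hq1, mul_sum]
  refine sum_congr rfl fun y hy => ?_
  rw [qBinomWeight, qBinomWeight, ← mul_assoc, ← mul_assoc,
    qFall_sub_mul_qBinom hq0 hq1 (by have := mem_range.1 hy; omega), Nat.add_sub_cancel]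
  ring

end QFalling

lemma qTri_eq_mul_qBinom {q : ℝ} (hq0 : 0 ≤ q) (hq1 : q ≠ 1) (n y₁ y₂ : ℕ) :
    qTri q n y₁ y₂ = qBinom q n y₁ * qBinom q (n - y₁) y₂ := by
  rw [qTri, qBinom, qBinom, div_mul_div_comm, mul_mul_mul_comm, mul_comm (qFact q (n - y₁)),
    ← mul_assoc, mul_div_mul_right _ _ (qFact_pos hq0 hq1 (n - y₁)).ne', Nat.sub_sub]

lemma fpmf_eq_mul {q : ℝ} (hq0 : 0 ≤ q) (hq1 : q ≠ 1) (α₁ α₂ : ℝ) (n y₁ y₂ : ℕ) :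
    fpmf q α₁ α₂ n y₁ y₂ = qBinomWeight q α₁ n y₁ / oplus q α₁ n
      * (qBinomWeight q α₂ (n - y₁) y₂ / oplus q α₂ (n - y₁)) := by
  rw [fpmf, qTri_eq_mul_qBinom hq0 hq1, qBinomWeight, qBinomWeight, pow_add]
  ring

theorem stmt2_general (q : ℝ) (hq0 : 0 < q) (hq1 : q < 1) (n : ℕ) (α1 α2 : ℝ)
    (hα1 : 0 < α1) (hα2 : 0 < α2)
    (m2 : ℕ) (hm2 : m2 ≤ n) :
    ∑ y1 ∈ Finset.range (n + 1), ∑ y2 ∈ Finset.range (n - y1 + 1),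
      qFall q (y2 : ℤ) m2 * fpmf q α1 α2 n y1 y2
      = qFall q (n : ℤ) m2 * α2 ^ m2 * q ^ bb m2 /
        (oplus q α2 m2 * ∏ i ∈ Finset.Icc 1 m2, (1 + α1 * q ^ (n - m2 + i - 1))) := by
  have hq1' := hq1.ne
  have hinner (y1 : ℕ) : ∑ y2 ∈ range (n - y1 + 1), qFall q y2 m2 * fpmf q α1 α2 n y1 y2
      = qFall q (n - y1 : ℕ) m2 * qBinomWeight q α1 n y1
        * (α2 ^ m2 * q ^ bb m2 / (oplus q α1 n * oplus q α2 m2)) := by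
    simp_rw [fpmf_eq_mul hq0.le hq1', mul_left_comm (qFall q _ m2), ← mul_sum, ← mul_div_assoc,
      sum_qFall_mul_qBinomWeight_div_oplus hq0.le hq1' hα2.le]
    ring
  have hsplit : oplus q α1 n = oplus q α1 (n - m2) * oplus q (α1 * q ^ (n - m2)) m2 := by
    rw [← oplus_add, Nat.sub_add_cancel hm2]
  simp_rw [hinner, ← sum_mul, sum_qFall_sub_mul_qBinomWeight hq0.le hq1' α1 hm2,
    prod_Icc_one_add_mul_pow_eq_oplus, hsplit]
  have := (oplus_pos hq0.le hα1.le (n - m2)).ne'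
  have := (oplus_pos hq0.le (by positivity : 0 ≤ α1 * q ^ (n - m2)) m2).ne'
  have := (oplus_pos hq0.le hα2.le m2).ne'
  field_simp

theorem stmt2 (q : ℝ) (hq0 : 0 < q) (hq1 : q < 1) (n : ℕ) (α1 α2 : ℝ)
    (hα1 : 0 < α1) (hα1' : α1 < 1) (hα2 : 0 < α2) (hα2' : α2 < 1)
    (m2 : ℕ) (hm2 : m2 ≤ n) :
    ∑ y1 ∈ Finset.range (n + 1), ∑ y2 ∈ Finset.range (n - y1 + 1),
      qFall q (y2 : ℤ) m2 * fpmf q α1 α2 n y1 y2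
      = qFall q (n : ℤ) m2 * α2 ^ m2 * q ^ bb m2 /
        (oplus q α2 m2 * ∏ i ∈ Finset.Icc 1 m2, (1 + α1 * q ^ (n - m2 + i - 1))) :=
  stmt2_general q hq0 hq1 n α1 α2 hα1 hα2 m2 hm2
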